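/- arXiv:1703.00604 — 3 statements merged into one kernel-verified Lean document; each statement's English description precedes it below -/
import Mathlib

section
/- Let V be a continuous, finitely subadditive capacity on a measurable space (Ω, F) and let {Aₙ, n ≥ 1} be a sequence of events in F. If Σ_{n=1}^∞ V(Aₙ) < ∞, then V(⋂_{n=1}^∞ ⋃_{i=n}^∞ A_i) = 0, i.e. V(limsup_n Aₙ) = 0. -/
open Filter MeasureTheory Set

/-- The class `C_{l,Lip}` of local Lipschitz functions:
`|φ(x) − φ(y)| ≤ C (1 + ‖x‖^m + ‖y‖^m) ‖x − y‖` for some `C > 0` and `m : ℕ`. -/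
def LocLip {α : Type*} [NormedAddCommGroup α] (φ : α → ℝ) : Prop :=
  ∃ C : ℝ, 0 < C ∧ ∃ m : ℕ, ∀ x y : α,
    |φ x - φ y| ≤ C * (1 + ‖x‖ ^ m + ‖y‖ ^ m) * ‖x - y‖

/-- A sublinear expectation space `(Ω, H, Ê)`: `H` is a set of real functions on `Ω`
containing constants, stable under composition with `C_{l,Lip}` functions, and
`E` is monotone, constant preserving, subadditive and positively homogeneous on `H`. -/
structure SubLinExp (Ω : Type*) where
  H : Set (Ω → ℝ)
  E : (Ω → ℝ) → ℝ
  const_mem : ∀ c : ℝ, (fun _ => c) ∈ H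
  comp_mem : ∀ (n : ℕ) (X : Fin n → Ω → ℝ), (∀ i, X i ∈ H) →
    ∀ φ : (Fin n → ℝ) → ℝ, LocLip φ → (fun ω => φ (fun i => X i ω)) ∈ H
  mono : ∀ X ∈ H, ∀ Y ∈ H, (∀ ω, Y ω ≤ X ω) → E Y ≤ E X
  const : ∀ c : ℝ, E (fun _ => c) = c
  subadd : ∀ X ∈ H, ∀ Y ∈ H, E (fun ω => X ω + Y ω) ≤ E X + E Y
  homog : ∀ l : ℝ, 0 ≤ l → ∀ X ∈ H, E (fun ω => l * X ω) = l * E X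

/-- `Y` is independent of the random vector `X = (X₁,…,X_m)`:
`Ê(φ(X,Y)) = Ê(ψ(X))` where `ψ(x) = Ê(φ(x,Y))`, for all `φ ∈ C_{l,Lip}`. -/
def IndepVecOf {Ω : Type*} (S : SubLinExp Ω) {m : ℕ} (Y : Ω → ℝ)
    (X : Fin m → Ω → ℝ) : Prop :=
  ∀ φ : (Fin m → ℝ) → ℝ → ℝ, LocLip (fun q : (Fin m → ℝ) × ℝ => φ q.1 q.2) →
    S.E (fun ω => φ (fun i => X i ω) (Y ω)) =
      S.E (fun ω => S.E (fun ω' => φ (fun i => X i ω) (Y ω')))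

/-- The (1-based) sequence `X₁, X₂, …` is independent:
`X_{i+1}` is independent of `(X₁,…,X_i)` for each `i ≥ 1`. -/
def IndepSeq1 {Ω : Type*} (S : SubLinExp Ω) (X : ℕ → Ω → ℝ) : Prop :=
  ∀ i : ℕ, 1 ≤ i → IndepVecOf S (X (i + 1)) (fun j : Fin i => X ((j : ℕ) + 1))

/-- The (1-based) finite sequence `X₁,…,Xₙ` is independent. -/
def IndepUpTo1 {Ω : Type*} (S : SubLinExp Ω) (X : ℕ → Ω → ℝ) (n : ℕ) : Prop :=
  ∀ i : ℕ, 1 ≤ i → i + 1 ≤ n → IndepVecOf S (X (i + 1)) (fun j : Fin i => X ((j : ℕ) + 1))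

/-- The (1-based) sequence `X₁, X₂, …` is identically distributed. -/
def IdentDist1 {Ω : Type*} (S : SubLinExp Ω) (X : ℕ → Ω → ℝ) : Prop :=
  ∀ i : ℕ, 1 ≤ i → ∀ φ : ℝ → ℝ, LocLip φ →
    S.E (fun ω => φ (X i ω)) = S.E (fun ω => φ (X 1 ω))

/-- A capacity `V` is continuous: `V(Aₙ) ↑ V(A)` if `Aₙ ↑ A` and `V(Aₙ) ↓ V(A)` if `Aₙ ↓ A`. -/
def ContCapacity {Ω : Type*} (V : Set Ω → ℝ) : Prop :=
  (∀ A : ℕ → Set Ω, Monotone A →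
    Tendsto (fun n => V (A n)) atTop (nhds (V (⋃ n, A n)))) ∧
  (∀ A : ℕ → Set Ω, Antitone A →
    Tendsto (fun n => V (A n)) atTop (nhds (V (⋂ n, A n))))

/-- The upper capacity generated by a sublinear expectation: `V(A) = Ê(1_A)`. -/
noncomputable def genV {Ω : Type*} (S : SubLinExp Ω) : Set Ω → ℝ :=
  fun A => S.E (A.indicator fun _ => (1 : ℝ))

/-- The Choquet integral `C_V(Z) = ∫₀^∞ V(Z ≥ t) dt` of a nonnegative random variable. -/
noncomputable def choquet {Ω : Type*} (V : Set Ω → ℝ) (Z : Ω → ℝ) : ENNReal :=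
  ∫⁻ t in Set.Ioi (0 : ℝ), ENNReal.ofReal (V {ω | t ≤ Z ω})

/-- The sublinear expectation `Ê` is regular: `Ê(Xₙ) ↓ 0` whenever `Xₙ(ω) ↓ 0` for every `ω`. -/
def Regular {Ω : Type*} (S : SubLinExp Ω) : Prop :=
  ∀ X : ℕ → Ω → ℝ, (∀ n, X n ∈ S.H) → (∀ ω, Antitone fun n => X n ω) →
    (∀ ω, Tendsto (fun n => X n ω) atTop (nhds 0)) →
    Tendsto (fun n => S.E (X n)) atTop (nhds 0)

/-! Continuity from below upgrades finite subadditivity to countable subadditivity, so the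
capacity of the `n`-th tail union `⋃ i ≥ n, A i` is at most the `n`-th tail of the convergent
series `Σ V(Aᵢ)`. These tail unions decrease to the limsup set, and continuity from above
passes the bound to the limit. -/

theorem capacity_iUnion_le_tsum {Ω : Type*} {V : Set Ω → ℝ} (hnonneg : ∀ A, 0 ≤ V A)
    (hempty : V ∅ = 0) (hsubadd : ∀ A B, V (A ∪ B) ≤ V A + V B)
    (hcont : ∀ A : ℕ → Set Ω, Monotone A →
      Tendsto (fun n => V (A n)) atTop (nhds (V (⋃ n, A n))))
    {A : ℕ → Set Ω} (hsum : Summable fun n => V (A n)) :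
    V (⋃ n, A n) ≤ ∑' n, V (A n) := by
  have hpartial : ⋃ n, ⋃ i ∈ Finset.range n, A i = ⋃ n, A n := by
    ext x
    simp only [Set.mem_iUnion, Finset.mem_range]
    exact ⟨fun ⟨_, i, _, hx⟩ => ⟨i, hx⟩, fun ⟨i, hx⟩ => ⟨i + 1, i, i.lt_succ_self, hx⟩⟩
  have hmono : Monotone fun n => ⋃ i ∈ Finset.range n, A i := fun m n hmn =>
    Set.biUnion_subset_biUnion_left (by simpa using Finset.range_mono hmn)
  refine le_of_tendsto (hpartial ▸ hcont _ hmono) (Eventually.of_forall fun n => ?_)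
  calc V (⋃ i ∈ Finset.range n, A i) ≤ ∑ i ∈ Finset.range n, V (A i) :=
        Finset.apply_union_le_sum hempty (hsubadd _ _) _
    _ ≤ ∑' i, V (A i) := hsum.sum_le_tsum _ fun i _ => hnonneg _

theorem borel_cantelli_capacity_general {Ω : Type*} (V : Set Ω → ℝ)
    (hrange : ∀ A : Set Ω, 0 ≤ V A ∧ V A ≤ 1)
    (hempty : V ∅ = 0)
    (hsubadd : ∀ A B : Set Ω, V (A ∪ B) ≤ V A + V B)
    (hcont : ContCapacity V)
    (A : ℕ → Set Ω) (hsum : Summable fun n => V (A n)) :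
    V (⋂ n, ⋃ i, ⋃ _ : n ≤ i, A i) = 0 := by
  set tail : ℕ → Set Ω := fun n => ⋃ i, ⋃ _ : n ≤ i, A i
  have htail_anti : Antitone tail := fun m n hmn =>
    Set.biUnion_subset_biUnion_left fun i hi => hmn.trans hi
  have htail_le : ∀ n, V (tail n) ≤ ∑' k, V (A (k + n)) := fun n => by
    simp only [tail, Set.iUnion_ge_eq_iUnion_nat_add A n]
    exact capacity_iUnion_le_tsum (fun B => (hrange B).1) hempty hsubadd hcont.1
      ((summable_nat_add_iff n).mpr hsum)
  have hlimsup_le : V (⋂ n, tail n) ≤ 0 :=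
    le_of_tendsto_of_tendsto' (hcont.2 tail htail_anti)
      (tendsto_sum_nat_add fun n => V (A n)) htail_le
  exact le_antisymm hlimsup_le (hrange _).1

/-- Borel–Cantelli lemma for a continuous, finitely subadditive capacity:
if `Σₙ V(Aₙ) < ∞` then `V(limsup Aₙ) = 0`. -/
theorem borel_cantelli_capacity {Ω : Type*} (V : Set Ω → ℝ)
    (hrange : ∀ A : Set Ω, 0 ≤ V A ∧ V A ≤ 1)
    (hempty : V ∅ = 0) (huniv : V Set.univ = 1)
    (hmono : ∀ A B : Set Ω, A ⊆ B → V A ≤ V B)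
    (hsubadd : ∀ A B : Set Ω, V (A ∪ B) ≤ V A + V B)
    (hcont : ContCapacity V)
    (A : ℕ → Set Ω) (hsum : Summable fun n => V (A n)) :
    V (⋂ n, ⋃ i, ⋃ _ : n ≤ i, A i) = 0 :=
  borel_cantelli_capacity_general V hrange hempty hsubadd hcont A hsum
end

section
/- Let (Ω, H, Ê) be a sublinear expectation space with Ê regular, indicators of events lying in H, and V(A) := Ê(1_A) the capacity generated by Ê. If {ξₙ} ⊂ H is a Cauchy sequence in capacity (for every ε > 0, V(|ξₙ − ξ_m| ≥ ε) → 0 as n, m → ∞), then there exists a subsequence {ξ_{n_k}} and a random variable ξ such that ξ_{n_k} → ξ almost surely with respect to V, i.e. V({ω : ξ_{n_k}(ω) does not converge to ξ(ω)}) = 0. -/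
/-!
Choose `n_k` increasing with `V(|ξ_{n_{k+1}} - ξ_{n_k}| ≥ 2⁻ᵏ) < 2⁻ᵏ`. Regularity of `Ê` makes
`V` countably subadditive (continuity from below along `⋃_{i ≤ n} A_i`), so `A ↦ V(A)` is an
outer measure and the first Borel–Cantelli lemma applies: outside a `V`-null set,
`|ξ_{n_{k+1}} - ξ_{n_k}| < 2⁻ᵏ` for all large `k`, so `(ξ_{n_k}(ω))` is Cauchy and converges.
-/

open Filter MeasureTheory Set

open Topology
open scoped ENNReal

section Capacity

variable {Ω : Type*} {S : SubLinExp Ω}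

theorem genV_empty (S : SubLinExp Ω) : genV S ∅ = 0 := by
  simp only [genV, indicator_empty, S.const]

theorem genV_mono (hind : ∀ A : Set Ω, (A.indicator fun _ => (1 : ℝ)) ∈ S.H)
    {A B : Set Ω} (h : A ⊆ B) : genV S A ≤ genV S B :=
  S.mono _ (hind B) _ (hind A) (indicator_le_indicator_of_subset h fun _ => zero_le_one)

theorem genV_nonneg (hind : ∀ A : Set Ω, (A.indicator fun _ => (1 : ℝ)) ∈ S.H) (A : Set Ω) :
    0 ≤ genV S A :=
  genV_empty S ▸ genV_mono hind (empty_subset A)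

theorem genV_union_le (hind : ∀ A : Set Ω, (A.indicator fun _ => (1 : ℝ)) ∈ S.H)
    (A B : Set Ω) : genV S (A ∪ B) ≤ genV S A + genV S B := by
  -- `1_A + 1_B` need not lie in `H`, but `1_A + 1_{B \ A}` is the indicator `1_{A ∪ B}`
  have hsplit : ((A ∪ B).indicator fun _ => (1 : ℝ)) =
      fun ω => A.indicator (fun _ => (1 : ℝ)) ω + (B \ A).indicator (fun _ => (1 : ℝ)) ω := by
    rw [← union_sdiff_self, indicator_union_of_disjoint disjoint_sdiff_right]
  calc genV S (A ∪ B) ≤ genV S A + genV S (B \ A) := by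
        rw [genV, hsplit]; exact S.subadd _ (hind A) _ (hind (B \ A))
    _ ≤ genV S A + genV S B := by gcongr; exact genV_mono hind sdiff_subset

theorem genV_accumulate_le (hind : ∀ A : Set Ω, (A.indicator fun _ => (1 : ℝ)) ∈ S.H)
    (A : ℕ → Set Ω) (n : ℕ) :
    genV S (accumulate A n) ≤ ∑ i ∈ Finset.range (n + 1), genV S (A i) := by
  induction n with
  | zero => simp
  | succ n ih =>
    rw [accumulate_succ, Finset.sum_range_succ]
    exact (genV_union_le hind _ _).trans (by gcongr)

theorem tendsto_genV_iUnion_diff (hreg : Regular S)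
    (hind : ∀ A : Set Ω, (A.indicator fun _ => (1 : ℝ)) ∈ S.H)
    {B : ℕ → Set Ω} (hB : Monotone B) :
    Tendsto (fun n => genV S ((⋃ k, B k) \ B n)) atTop (𝓝 0) := by
  refine hreg _ (fun n => hind _) (fun ω m n hmn => ?_) (fun ω => ?_)
  · exact indicator_le_indicator_of_subset (sdiff_subset_sdiff_right (hB hmn))
      (fun _ => zero_le_one) ω
  · have hout : ∃ k, ∀ n ≥ k, ω ∉ (⋃ k, B k) \ B n := by
      by_cases hω : ω ∈ ⋃ k, B k
      · obtain ⟨k, hk⟩ := mem_iUnion.1 hω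
        exact ⟨k, fun n hn h => h.2 (hB hn hk)⟩
      · exact ⟨0, fun n _ h => hω h.1⟩
    obtain ⟨k, hk⟩ := hout
    exact tendsto_atTop_of_eventually_const fun n hn => indicator_of_notMem (hk n hn) _

theorem ofReal_genV_iUnion_le (hreg : Regular S)
    (hind : ∀ A : Set Ω, (A.indicator fun _ => (1 : ℝ)) ∈ S.H) (A : ℕ → Set Ω) :
    ENNReal.ofReal (genV S (⋃ i, A i)) ≤ ∑' i, ENNReal.ofReal (genV S (A i)) := by
  set U := ⋃ i, A i
  have hbound : ∀ n, ENNReal.ofReal (genV S U) ≤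
      (∑' i, ENNReal.ofReal (genV S (A i))) + ENNReal.ofReal (genV S (U \ accumulate A n)) := by
    intro n
    have hU : U = accumulate A n ∪ (U \ accumulate A n) :=
      (union_sdiff_cancel (accumulate_subset_iUnion n)).symm
    calc ENNReal.ofReal (genV S U)
        ≤ ENNReal.ofReal (∑ i ∈ Finset.range (n + 1), genV S (A i) +
            genV S (U \ accumulate A n)) := by
          refine ENNReal.ofReal_le_ofReal ?_
          conv_lhs => rw [hU]
          exact (genV_union_le hind _ _).trans (by gcongr; exact genV_accumulate_le hind A n)
      _ ≤ (∑ i ∈ Finset.range (n + 1), ENNReal.ofReal (genV S (A i))) +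
            ENNReal.ofReal (genV S (U \ accumulate A n)) := by
          rw [← ENNReal.ofReal_sum_of_nonneg fun i _ => genV_nonneg hind _]
          exact ENNReal.ofReal_add_le
      _ ≤ _ := by gcongr; exact ENNReal.sum_le_tsum _
  have hlim : Tendsto (fun n => ENNReal.ofReal (genV S (U \ accumulate A n))) atTop (𝓝 0) := by
    have := ENNReal.tendsto_ofReal
      (tendsto_genV_iUnion_diff hreg hind (monotone_accumulate (s := A)))
    rwa [iUnion_accumulate, ENNReal.ofReal_zero] at this
  simpa using ge_of_tendsto' (tendsto_const_nhds.add hlim) hbound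

noncomputable def capacityOuterMeasure (S : SubLinExp Ω) (hreg : Regular S)
    (hind : ∀ A : Set Ω, (A.indicator fun _ => (1 : ℝ)) ∈ S.H) : OuterMeasure Ω where
  measureOf A := ENNReal.ofReal (genV S A)
  empty := by rw [genV_empty, ENNReal.ofReal_zero]
  mono h := ENNReal.ofReal_le_ofReal (genV_mono hind h)
  iUnion_nat A _ := ofReal_genV_iUnion_le hreg hind A

theorem genV_setOf_frequently_eq_zero (hreg : Regular S)
    (hind : ∀ A : Set Ω, (A.indicator fun _ => (1 : ℝ)) ∈ S.H) {A : ℕ → Set Ω}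
    (hA : Summable fun k => genV S (A k)) :
    genV S {ω | ∃ᶠ k in atTop, ω ∈ A k} = 0 := by
  have hfin : ∑' k, capacityOuterMeasure S hreg hind (A k) ≠ ∞ := by
    change ∑' k, ENNReal.ofReal (genV S (A k)) ≠ ∞
    rw [← ENNReal.ofReal_tsum_of_nonneg (fun k => genV_nonneg hind _) hA]
    exact ENNReal.ofReal_ne_top
  have hnull := measure_setOfPred_frequently_eq_zero hfin
  exact le_antisymm (ENNReal.ofReal_eq_zero.1 hnull) (genV_nonneg hind _)

end Capacity

theorem cauchySeq_of_eventually_dist_lt_half_pow {α : Type*} [PseudoMetricSpace α] {u : ℕ → α}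
    (h : ∀ᶠ n in atTop, dist (u n) (u (n + 1)) < (1 / 2) ^ n) : CauchySeq u :=
  cauchySeq_of_summable_dist <| .of_norm_bounded_eventually_nat summable_geometric_two <|
    h.mono fun n hn => by rw [Real.norm_of_nonneg dist_nonneg]; exact hn.le

theorem cauchy_in_capacity_subseq_converges_general {Ω : Type*} (S : SubLinExp Ω)
    (hreg : Regular S)
    (hind : ∀ A : Set Ω, (A.indicator fun _ => (1 : ℝ)) ∈ S.H)
    (ξ : ℕ → Ω → ℝ)
    (hcauchy : ∀ ε : ℝ, 0 < ε → ∀ δ : ℝ, 0 < δ → ∃ N : ℕ, ∀ m ≥ N, ∀ n ≥ N,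
      genV S {ω | ε ≤ |ξ n ω - ξ m ω|} < δ) :
    ∃ φ : ℕ → ℕ, StrictMono φ ∧ ∃ ξ' : Ω → ℝ,
      genV S {ω | ¬ Tendsto (fun k => ξ (φ k) ω) atTop (nhds (ξ' ω))} = 0 := by
  have hpow : ∀ k : ℕ, (0 : ℝ) < (1 / 2) ^ k := fun k => by positivity
  obtain ⟨φ, hφ, hN⟩ := extraction_forall_of_eventually'
    (P := fun k m => ∀ n ≥ m, genV S {ω | (1 / 2) ^ k ≤ |ξ n ω - ξ m ω|} < (1 / 2) ^ k)
    fun k => (hcauchy _ (hpow k) _ (hpow k)).imp fun N hN m hm n hn => hN m hm n (hm.trans hn)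
  set A : ℕ → Set Ω := fun k => {ω | (1 / 2) ^ k ≤ |ξ (φ (k + 1)) ω - ξ (φ k) ω|}
  have hA : Summable fun k => genV S (A k) :=
    .of_nonneg_of_le (fun k => genV_nonneg hind _)
      (fun k => (hN k _ (hφ k.lt_succ_self).le).le) summable_geometric_two
  refine ⟨φ, hφ, fun ω => limUnder atTop fun k => ξ (φ k) ω, ?_⟩
  refine le_antisymm ?_ (genV_nonneg hind _)
  rw [← genV_setOf_frequently_eq_zero hreg hind hA]
  refine genV_mono hind fun ω hbad => ?_
  by_contra hfin
  refine hbad (CauchySeq.tendsto_limUnder (cauchySeq_of_eventually_dist_lt_half_pow ?_))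
  refine (not_frequently.1 hfin).mono fun k hk => ?_
  rw [dist_comm, Real.dist_eq]
  exact not_le.1 hk

/-- If `Ê` is regular and `{ξₙ}` is Cauchy in capacity, then some subsequence
`ξ_{n_k}` converges almost surely (w.r.t. `V`) to some random variable `ξ`. -/
theorem cauchy_in_capacity_subseq_converges {Ω : Type*} (S : SubLinExp Ω)
    (hreg : Regular S)
    (hind : ∀ A : Set Ω, (A.indicator fun _ => (1 : ℝ)) ∈ S.H)
    (ξ : ℕ → Ω → ℝ) (hξ : ∀ n, ξ n ∈ S.H)
    (hcauchy : ∀ ε : ℝ, 0 < ε → ∀ δ : ℝ, 0 < δ → ∃ N : ℕ, ∀ m ≥ N, ∀ n ≥ N,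
      genV S {ω | ε ≤ |ξ n ω - ξ m ω|} < δ) :
    ∃ φ : ℕ → ℕ, StrictMono φ ∧ ∃ ξ' : Ω → ℝ,
      genV S {ω | ¬ Tendsto (fun k => ξ (φ k) ω) atTop (nhds (ξ' ω))} = 0 :=
  cauchy_in_capacity_subseq_converges_general S hreg hind ξ hcauchy
end

section
/- (Exponential lower-capacity estimate.) Let {X_j} be an IID sequence in a sublinear expectation space (Ω, H, Ê), with indicators of events lying in H, and let v(A) := −Ê(−1_A). Let g : ℝ → ℝ be a nonnegative function in C_{l,Lip}(ℝ) with 1{x ≥ 1} ≤ g(x) ≤ 1{x > 1/2} for all x. Fix M > 0 and p ≥ 1. Then for every n ≥ 1 and every l ≥ 1, v( Σ_{j=1}^n g(|X_j| / (Mj)^{1/p}) < l ) ≤ e^{l/2} · exp( −(1/4) Σ_{j=1}^n Ê[ g(|X₁| / (Mj)^{1/p}) ] ). -/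
open Filter MeasureTheory Set

/-!
With `Gⱼ = g(|Xⱼ| / (Mj)^{1/p})` and `ε̂ Z = -Ê(-Z)`, the pointwise Chernoff-type bound
`1{∑ Gⱼ < l} ≤ e^{l/2} ∏ⱼ e^{-Gⱼ/2}` gives `v(∑ Gⱼ < l) ≤ e^{l/2} ε̂(∏ⱼ e^{-Gⱼ/2})`.
Independence and positive homogeneity make `ε̂` multiplicative on products of nonnegative
factors, and `e^{-t/2} ≤ 1 - t/4` on `[0, 1]` together with identical distribution bounds each
factor by `1 - Ê[g(|X₁| / (Mj)^{1/p})] / 4 ≤ exp(-Ê[g(|X₁| / (Mj)^{1/p})] / 4)`.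
-/

lemma pow_le_one_add_pow {a : ℝ} (ha : 0 ≤ a) {m m' : ℕ} (h : m ≤ m') : a ^ m ≤ 1 + a ^ m' := by
  rcases le_total a 1 with ha1 | ha1
  · linarith [pow_le_one₀ ha ha1 (n := m), pow_nonneg ha m']
  · linarith [pow_le_pow_right₀ ha1 h]

namespace LocLip

variable {α β : Type*} [NormedAddCommGroup α] [NormedAddCommGroup β]

lemma of_bound {φ : α → ℝ} (C : ℝ) (m : ℕ)
    (h : ∀ x y, |φ x - φ y| ≤ C * (1 + ‖x‖ ^ m + ‖y‖ ^ m) * ‖x - y‖) : LocLip φ :=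
  ⟨max C 1, by positivity, m, fun x y => (h x y).trans (by gcongr; exact le_max_left _ _)⟩

lemma exists_forall_ge_bound {φ : α → ℝ} (hφ : LocLip φ) :
    ∃ m₀ : ℕ, ∀ m ≥ m₀, ∃ C, ∀ x y, |φ x - φ y| ≤ C * (1 + ‖x‖ ^ m + ‖y‖ ^ m) * ‖x - y‖ := by
  obtain ⟨C, hC, m₀, h⟩ := hφ
  refine ⟨m₀, fun m hm => ⟨3 * C, fun x y => (h x y).trans ?_⟩⟩
  have hx := pow_le_one_add_pow (norm_nonneg x) hm
  have hy := pow_le_one_add_pow (norm_nonneg y) hm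
  have hpoly : 1 + ‖x‖ ^ m₀ + ‖y‖ ^ m₀ ≤ 3 * (1 + ‖x‖ ^ m + ‖y‖ ^ m) := by
    nlinarith [pow_nonneg (norm_nonneg x) m, pow_nonneg (norm_nonneg y) m]
  calc C * (1 + ‖x‖ ^ m₀ + ‖y‖ ^ m₀) * ‖x - y‖
      ≤ C * (3 * (1 + ‖x‖ ^ m + ‖y‖ ^ m)) * ‖x - y‖ := by gcongr
    _ = 3 * C * (1 + ‖x‖ ^ m + ‖y‖ ^ m) * ‖x - y‖ := by ring

lemma _root_.LipschitzWith.locLip {K : NNReal} {φ : α → ℝ} (hφ : LipschitzWith K φ) :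
    LocLip φ :=
  of_bound (3 * K) 0 fun x y => by
    have := hφ.norm_sub_le x y
    rw [Real.norm_eq_abs] at this
    nlinarith [norm_nonneg (x - y), K.coe_nonneg]

lemma comp_lipschitzWith {φ : β → ℝ} (hφ : LocLip φ) {K : NNReal} {f : α → β}
    (hf : LipschitzWith K f) (hf0 : f 0 = 0) : LocLip (φ ∘ f) := by
  obtain ⟨C, hC, m, h⟩ := hφ
  have hnorm : ∀ x, ‖f x‖ ≤ K * ‖x‖ := fun x => by
    simpa [hf0] using hf.norm_sub_le x 0
  refine of_bound (C * (1 + (K : ℝ) ^ m) * K) m fun x y => (h (f x) (f y)).trans ?_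
  have hxm : ‖f x‖ ^ m ≤ (K : ℝ) ^ m * ‖x‖ ^ m := by
    rw [← mul_pow]; exact pow_le_pow_left₀ (norm_nonneg _) (hnorm x) m
  have hym : ‖f y‖ ^ m ≤ (K : ℝ) ^ m * ‖y‖ ^ m := by
    rw [← mul_pow]; exact pow_le_pow_left₀ (norm_nonneg _) (hnorm y) m
  have hpoly : 1 + ‖f x‖ ^ m + ‖f y‖ ^ m ≤ (1 + (K : ℝ) ^ m) * (1 + ‖x‖ ^ m + ‖y‖ ^ m) := by
    have : (1 + (K : ℝ) ^ m) * (1 + ‖x‖ ^ m + ‖y‖ ^ m) =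
        1 + (K : ℝ) ^ m * ‖x‖ ^ m + (K : ℝ) ^ m * ‖y‖ ^ m + ((K : ℝ) ^ m + ‖x‖ ^ m + ‖y‖ ^ m) := by
      ring
    linarith [pow_nonneg K.coe_nonneg m, pow_nonneg (norm_nonneg x) m,
      pow_nonneg (norm_nonneg y) m]
  calc C * (1 + ‖f x‖ ^ m + ‖f y‖ ^ m) * ‖f x - f y‖
      ≤ C * ((1 + (K : ℝ) ^ m) * (1 + ‖x‖ ^ m + ‖y‖ ^ m)) * (K * ‖x - y‖) := by
        gcongr
        exact hf.norm_sub_le x y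
    _ = C * (1 + (K : ℝ) ^ m) * K * (1 + ‖x‖ ^ m + ‖y‖ ^ m) * ‖x - y‖ := by ring

lemma lipschitzOnWith_comp {φ : α → ℝ} (hφ : LocLip φ) {K : NNReal} {ψ : ℝ → ℝ} {s : Set ℝ}
    (hψ : LipschitzOnWith K ψ s) (hφs : ∀ x, φ x ∈ s) : LocLip (ψ ∘ φ) := by
  obtain ⟨C, -, m, h⟩ := hφ
  refine of_bound (K * C) m fun x y => ?_
  have hψφ := hψ.norm_sub_le (hφs x) (hφs y)
  simp only [Real.norm_eq_abs] at hψφ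
  calc |ψ (φ x) - ψ (φ y)| ≤ K * |φ x - φ y| := hψφ
    _ ≤ K * (C * (1 + ‖x‖ ^ m + ‖y‖ ^ m) * ‖x - y‖) := by gcongr; exact h x y
    _ = K * C * (1 + ‖x‖ ^ m + ‖y‖ ^ m) * ‖x - y‖ := by ring

lemma neg {φ : α → ℝ} (hφ : LocLip φ) : LocLip fun x => -φ x :=
  hφ.lipschitzOnWith_comp (s := univ) LipschitzWith.id.neg.lipschitzOnWith fun _ => trivial

lemma exp_neg_half {φ : α → ℝ} (hφ : LocLip φ) (h0 : ∀ x, 0 ≤ φ x) (h1 : ∀ x, φ x ≤ 1) :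
    LocLip fun x => Real.exp (-(φ x / 2)) := by
  have hdiff : ContDiff ℝ 1 fun t : ℝ => Real.exp (-(t / 2)) := by fun_prop
  obtain ⟨K, hK⟩ :=
    hdiff.contDiffOn.exists_lipschitzOnWith one_ne_zero (convex_Icc (0 : ℝ) 1) isCompact_Icc
  exact hφ.lipschitzOnWith_comp hK fun x => ⟨h0 x, h1 x⟩

lemma mul {φ ψ : α → ℝ} (hφ : LocLip φ) (hψ : LocLip ψ) {A B : ℝ} (hA : ∀ x, |φ x| ≤ A)
    (hB : ∀ x, |ψ x| ≤ B) : LocLip fun x => φ x * ψ x := by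
  obtain ⟨m₁, hφ⟩ := hφ.exists_forall_ge_bound
  obtain ⟨m₂, hψ⟩ := hψ.exists_forall_ge_bound
  obtain ⟨Cφ, hCφ⟩ := hφ (max m₁ m₂) (le_max_left _ _)
  obtain ⟨Cψ, hCψ⟩ := hψ (max m₁ m₂) (le_max_right _ _)
  refine of_bound (A * Cψ + B * Cφ) (max m₁ m₂) fun x y => ?_
  have hA0 : 0 ≤ A := (abs_nonneg _).trans (hA 0)
  have hB0 : 0 ≤ B := (abs_nonneg _).trans (hB 0)
  calc |φ x * ψ x - φ y * ψ y| = |φ x * (ψ x - ψ y) + ψ y * (φ x - φ y)| := by ring_nf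
    _ ≤ |φ x| * |ψ x - ψ y| + |ψ y| * |φ x - φ y| := by
        rw [← abs_mul, ← abs_mul]; exact abs_add_le _ _
    _ ≤ A * |ψ x - ψ y| + B * |φ x - φ y| := by gcongr <;> simp only [hA, hB]
    _ ≤ A * (Cψ * (1 + ‖x‖ ^ max m₁ m₂ + ‖y‖ ^ max m₁ m₂) * ‖x - y‖) +
          B * (Cφ * (1 + ‖x‖ ^ max m₁ m₂ + ‖y‖ ^ max m₁ m₂) * ‖x - y‖) := by
        gcongr
        exacts [hCψ x y, hCφ x y]
    _ = _ := by ring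

lemma prod_apply {n : ℕ} {f : Fin n → ℝ → ℝ} (hf : ∀ i, LocLip (f i)) {B : Fin n → ℝ}
    (hB : ∀ i x, |f i x| ≤ B i) : LocLip fun x : Fin n → ℝ => ∏ i, f i (x i) := by
  induction n with
  | zero => exact of_bound 0 0 fun x y => by simp
  | succ n ih =>
    have htail : LipschitzWith 1 (Fin.tail : (Fin (n + 1) → ℝ) → Fin n → ℝ) :=
      LipschitzWith.of_dist_le_mul fun x y => by
        simpa [dist_pi_le_iff dist_nonneg, Fin.tail] using
          fun i => dist_le_pi_dist x y (Fin.succ i)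
    simp only [Fin.prod_univ_succ]
    refine mul ((hf 0).comp_lipschitzWith (LipschitzWith.eval 0) rfl)
      ((ih (fun i : Fin n => hf i.succ) (fun i : Fin n => hB i.succ)).comp_lipschitzWith
        htail rfl)
      (fun x => hB 0 (x 0)) (B := ∏ i : Fin n, B i.succ) fun x => ?_
    rw [Finset.abs_prod]
    exact Finset.prod_le_prod (fun i _ => abs_nonneg _) fun i _ => hB i.succ _

end LocLip

lemma lipschitzWith_abs_div (c : ℝ) : LipschitzWith ‖c⁻¹‖₊ fun x : ℝ => |x| / c := by
  have := (lipschitzWith_smul c⁻¹).comp (lipschitzWith_one_norm (E := ℝ))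
  simpa [div_eq_inv_mul, Function.comp_def] using this

lemma Real.exp_neg_half_le {t : ℝ} (h0 : 0 ≤ t) (h2 : t ≤ 2) :
    Real.exp (-(t / 2)) ≤ 1 - t / 4 := by
  have hinv : Real.exp (-(t / 2)) * Real.exp (t / 2) = 1 := by rw [← Real.exp_add]; simp
  nlinarith [Real.add_one_le_exp (t / 2), Real.exp_pos (-(t / 2))]

lemma indicator_sum_lt_le_exp {Ω ι : Type*} (s : Finset ι) (a : ι → Ω → ℝ) (l : ℝ) (ω : Ω) :
    {ω | ∑ j ∈ s, a j ω < l}.indicator (fun _ => (1 : ℝ)) ω ≤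
      Real.exp (l / 2) * ∏ j ∈ s, Real.exp (-(a j ω / 2)) := by
  rw [← Real.exp_sum, ← Real.exp_add]
  simp only [indicator_apply, mem_ofPred_eq]
  split_ifs with h
  · refine Real.one_le_exp ?_
    rw [Finset.sum_neg_distrib, ← Finset.sum_div]
    linarith
  · positivity

lemma Finset.prod_one_sub_le_exp_neg_sum {ι : Type*} (s : Finset ι) {a : ι → ℝ}
    (ha : ∀ i ∈ s, a i ≤ 1) : ∏ i ∈ s, (1 - a i) ≤ Real.exp (-∑ i ∈ s, a i) := by
  rw [← Finset.sum_neg_distrib, Real.exp_sum]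
  exact Finset.prod_le_prod (fun i hi => sub_nonneg.2 (ha i hi)) fun i _ =>
    Real.one_sub_le_exp_neg _

lemma Finset.prod_Icc_one_eq_prod_fin {M : Type*} [CommMonoid M] (f : ℕ → M) (k : ℕ) :
    ∏ j ∈ Finset.Icc 1 k, f j = ∏ i : Fin k, f (i + 1) := by
  rw [Fin.prod_univ_eq_prod_range (fun i => f (i + 1)), Finset.range_eq_Ico,
    Finset.prod_Ico_add']
  rfl

namespace SubLinExp

variable {Ω : Type*} (S : SubLinExp Ω)

/-- The lower expectation `ε̂`; the lower capacity is `v(A) = S.lowerE (A.indicator 1)`. -/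
noncomputable def lowerE (Z : Ω → ℝ) : ℝ := -S.E fun ω => -Z ω

variable {S}

lemma comp_mem_of_mem {Z : Ω → ℝ} (hZ : Z ∈ S.H) {φ : ℝ → ℝ} (hφ : LocLip φ) :
    (fun ω => φ (Z ω)) ∈ S.H :=
  S.comp_mem 1 (fun _ => Z) (fun _ => hZ) (fun x => φ (x 0))
    (hφ.comp_lipschitzWith (LipschitzWith.eval 0) rfl)

lemma neg_mem {Z : Ω → ℝ} (hZ : Z ∈ S.H) : (fun ω => -Z ω) ∈ S.H :=
  comp_mem_of_mem hZ LipschitzWith.id.neg.locLip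

lemma const_mul_mem {Z : Ω → ℝ} (hZ : Z ∈ S.H) (c : ℝ) : (fun ω => c * Z ω) ∈ S.H :=
  comp_mem_of_mem hZ (lipschitzWith_smul c).locLip

lemma const_add_mul_mem {Z : Ω → ℝ} (hZ : Z ∈ S.H) (a b : ℝ) :
    (fun ω => a + b * Z ω) ∈ S.H :=
  comp_mem_of_mem hZ ((LipschitzWith.const a).add (lipschitzWith_smul b)).locLip

lemma prod_Icc_comp_mem {X : ℕ → Ω → ℝ} (hX : ∀ i, X i ∈ S.H) {f : ℕ → ℝ → ℝ}
    (hf : ∀ j, LocLip (f j)) {B : ℕ → ℝ} (hfB : ∀ j x, |f j x| ≤ B j) (k : ℕ) :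
    (fun ω => ∏ j ∈ Finset.Icc 1 k, f j (X j ω)) ∈ S.H := by
  simp only [Finset.prod_Icc_one_eq_prod_fin]
  exact S.comp_mem k (fun i => X (i + 1)) (fun i => hX _) _
    (LocLip.prod_apply (fun i => hf (i + 1)) fun i => hfB (i + 1))

lemma E_le_of_le {Z : Ω → ℝ} (hZ : Z ∈ S.H) {c : ℝ} (h : ∀ ω, Z ω ≤ c) : S.E Z ≤ c :=
  (S.mono _ (S.const_mem c) _ hZ h).trans_eq (S.const c)

lemma E_const_add {Z : Ω → ℝ} (hZ : Z ∈ S.H) (c : ℝ) :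
    S.E (fun ω => c + Z ω) = c + S.E Z := by
  have hle := S.subadd _ (S.const_mem c) _ hZ
  have hge := S.subadd _ (const_add_mul_mem hZ c 1) _ (S.const_mem (-c))
  simp only [one_mul, add_neg_cancel_comm, S.const] at hle hge
  linarith

lemma lowerE_mono {Z W : Ω → ℝ} (hZ : Z ∈ S.H) (hW : W ∈ S.H) (h : ∀ ω, Z ω ≤ W ω) :
    S.lowerE Z ≤ S.lowerE W :=
  neg_le_neg (S.mono _ (neg_mem hZ) _ (neg_mem hW) fun ω => neg_le_neg (h ω))

lemma lowerE_nonneg {Z : Ω → ℝ} (hZ : Z ∈ S.H) (h : ∀ ω, 0 ≤ Z ω) : 0 ≤ S.lowerE Z :=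
  neg_nonneg.2 (E_le_of_le (neg_mem hZ) fun ω => neg_nonpos.2 (h ω))

lemma lowerE_const_mul {Z : Ω → ℝ} (hZ : Z ∈ S.H) {c : ℝ} (hc : 0 ≤ c) :
    S.lowerE (fun ω => c * Z ω) = c * S.lowerE Z := by
  simp only [lowerE, ← mul_neg, S.homog c hc _ (neg_mem hZ)]

lemma lowerE_exp_neg_half_le {Y : Ω → ℝ} (hY : Y ∈ S.H) {φ : ℝ → ℝ} (hφ : LocLip φ)
    (h0 : ∀ x, 0 ≤ φ x) (h1 : ∀ x, φ x ≤ 1) :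
    S.lowerE (fun ω => Real.exp (-(φ (Y ω) / 2))) ≤ 1 - S.E (fun ω => φ (Y ω)) / 4 := by
  have hφY : (fun ω => φ (Y ω)) ∈ S.H := comp_mem_of_mem hY hφ
  calc S.lowerE (fun ω => Real.exp (-(φ (Y ω) / 2)))
      ≤ S.lowerE (fun ω => 1 + (-1 / 4) * φ (Y ω)) :=
        lowerE_mono (comp_mem_of_mem hY (hφ.exp_neg_half h0 h1)) (const_add_mul_mem hφY _ _)
          fun ω => by linarith [Real.exp_neg_half_le (h0 (Y ω)) (by linarith [h1 (Y ω)])]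
    _ = 1 - S.E (fun ω => φ (Y ω)) / 4 := by
        have hneg : (fun ω => -(1 + (-1 / 4) * φ (Y ω))) = fun ω => -1 + 1 / 4 * φ (Y ω) :=
          funext fun ω => by ring
        simp only [lowerE, hneg, E_const_add (const_mul_mem hφY (1 / 4)),
          S.homog (1 / 4) (by norm_num) _ hφY]
        ring

end SubLinExp

section Independence

variable {Ω : Type*} {S : SubLinExp Ω}

lemma indepVecOf_fin_zero (Y : Ω → ℝ) (X : Fin 0 → Ω → ℝ) : IndepVecOf S Y X := by
  intro φ _
  have hX : ∀ ω, (fun i => X i ω) = Fin.elim0 := fun ω => funext fun i => i.elim0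
  simp only [hX, S.const]

lemma IndepSeq1.indepVecOf {X : ℕ → Ω → ℝ} (h : IndepSeq1 S X) (k : ℕ) :
    IndepVecOf S (X (k + 1)) fun j : Fin k => X (j + 1) := by
  rcases k with _ | k
  · exact indepVecOf_fin_zero _ _
  · exact h (k + 1) k.succ_pos

lemma IndepVecOf.lowerE_mul {m : ℕ} {Y : Ω → ℝ} {X : Fin m → Ω → ℝ} (h : IndepVecOf S Y X)
    (hX : ∀ i, X i ∈ S.H) (hY : Y ∈ S.H) {Φ : (Fin m → ℝ) → ℝ} {ψ : ℝ → ℝ}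
    (hΦ : LocLip Φ) (hψ : LocLip ψ) {A B : ℝ} (hΦ0 : ∀ x, 0 ≤ Φ x) (hΦA : ∀ x, Φ x ≤ A)
    (hψ0 : ∀ y, 0 ≤ ψ y) (hψB : ∀ y, ψ y ≤ B) :
    S.lowerE (fun ω => Φ (fun i => X i ω) * ψ (Y ω)) =
      S.lowerE (fun ω => Φ (fun i => X i ω)) * S.lowerE (fun ω => ψ (Y ω)) := by
  have hΦX : (fun ω => Φ (fun i => X i ω)) ∈ S.H := S.comp_mem m X hX Φ hΦ
  have hψY : (fun ω => ψ (Y ω)) ∈ S.H := SubLinExp.comp_mem_of_mem hY hψ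
  have hpair : LocLip fun q : (Fin m → ℝ) × ℝ => -(Φ q.1 * ψ q.2) :=
    ((hΦ.comp_lipschitzWith LipschitzWith.prod_fst rfl).mul
      (hψ.comp_lipschitzWith LipschitzWith.prod_snd rfl)
      (fun q : (Fin m → ℝ) × ℝ => (abs_of_nonneg (hΦ0 q.1)).trans_le (hΦA q.1))
      (fun q : (Fin m → ℝ) × ℝ => (abs_of_nonneg (hψ0 q.2)).trans_le (hψB q.2))).neg
  -- for fixed `ω`, the factor `Φ (X ω) ≥ 0` leaves the inner expectation by homogeneity
  have hfactor := h (fun x y => -(Φ x * ψ y)) hpair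
  simp only [neg_mul_eq_mul_neg, S.homog _ (hΦ0 _) _ (SubLinExp.neg_mem hψY)] at hfactor
  calc S.lowerE (fun ω => Φ (fun i => X i ω) * ψ (Y ω))
      = -S.E (fun ω => S.lowerE (fun ω => ψ (Y ω)) * -Φ (fun i => X i ω)) := by
        simp only [SubLinExp.lowerE, neg_mul_eq_mul_neg, hfactor]
        congr 2; funext ω; ring
    _ = _ := by
        rw [S.homog _ (SubLinExp.lowerE_nonneg hψY fun ω => hψ0 _) _ (SubLinExp.neg_mem hΦX)]
        simp only [SubLinExp.lowerE]; ring

theorem IndepSeq1.lowerE_prod_Icc {X : ℕ → Ω → ℝ} (hindep : IndepSeq1 S X)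
    (hX : ∀ i, X i ∈ S.H) {f : ℕ → ℝ → ℝ} (hf : ∀ j, LocLip (f j)) (hf0 : ∀ j x, 0 ≤ f j x)
    {B : ℕ → ℝ} (hfB : ∀ j x, f j x ≤ B j) (n : ℕ) :
    S.lowerE (fun ω => ∏ j ∈ Finset.Icc 1 n, f j (X j ω)) =
      ∏ j ∈ Finset.Icc 1 n, S.lowerE fun ω => f j (X j ω) := by
  induction n with
  | zero => simp [SubLinExp.lowerE, S.const]
  | succ k ih =>
    simp only [Finset.prod_Icc_succ_top (Nat.le_add_left 1 k)]
    rw [← ih]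
    simp only [Finset.prod_Icc_one_eq_prod_fin]
    exact (hindep.indepVecOf k).lowerE_mul (fun i => hX _) (hX _)
      (LocLip.prod_apply (fun i => hf (i + 1)) fun i x =>
        (abs_of_nonneg (hf0 _ x)).trans_le (hfB _ x))
      (hf _) (fun x => Finset.prod_nonneg fun i _ => hf0 _ _)
      (fun x => Finset.prod_le_prod (fun i _ => hf0 _ _) fun i _ => hfB _ _) (hf0 _) (hfB _)

theorem IndepSeq1.lowerE_sum_lt_le {X : ℕ → Ω → ℝ} (hindep : IndepSeq1 S X)
    (hid : IdentDist1 S X) (hX : ∀ i, X i ∈ S.H) {G : ℕ → ℝ → ℝ} (hG : ∀ j, LocLip (G j))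
    (hG0 : ∀ j x, 0 ≤ G j x) (hG1 : ∀ j x, G j x ≤ 1) (n : ℕ) (l : ℝ)
    (hA : ({ω | ∑ j ∈ Finset.Icc 1 n, G j (X j ω) < l}.indicator fun _ => (1 : ℝ)) ∈ S.H) :
    S.lowerE ({ω | ∑ j ∈ Finset.Icc 1 n, G j (X j ω) < l}.indicator fun _ => 1) ≤
      Real.exp (l / 2) *
        Real.exp (-(1 / 4) * ∑ j ∈ Finset.Icc 1 n, S.E fun ω => G j (X 1 ω)) := by
  have hH : ∀ j, LocLip fun x => Real.exp (-(G j x / 2)) :=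
    fun j => (hG j).exp_neg_half (hG0 j) (hG1 j)
  have hH0 : ∀ j x, 0 ≤ Real.exp (-(G j x / 2)) := fun j x => (Real.exp_pos _).le
  have hH1 : ∀ j x, Real.exp (-(G j x / 2)) ≤ 1 := fun j x =>
    Real.exp_le_one_iff.2 (by linarith [hG0 j x])
  have hHmem := SubLinExp.prod_Icc_comp_mem hX hH
    (fun j x => (abs_of_nonneg (hH0 j x)).trans_le (hH1 j x)) n
  have hEG : ∀ j, S.E (fun ω => G j (X 1 ω)) ≤ 1 := fun j =>
    SubLinExp.E_le_of_le (SubLinExp.comp_mem_of_mem (hX 1) (hG j)) fun ω => hG1 j _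
  calc S.lowerE ({ω | ∑ j ∈ Finset.Icc 1 n, G j (X j ω) < l}.indicator fun _ => 1)
      ≤ S.lowerE fun ω =>
          Real.exp (l / 2) * ∏ j ∈ Finset.Icc 1 n, Real.exp (-(G j (X j ω) / 2)) :=
        SubLinExp.lowerE_mono hA (SubLinExp.const_mul_mem hHmem _)
          (indicator_sum_lt_le_exp _ _ l)
    _ = Real.exp (l / 2) *
          ∏ j ∈ Finset.Icc 1 n, S.lowerE fun ω => Real.exp (-(G j (X j ω) / 2)) := by
        rw [SubLinExp.lowerE_const_mul hHmem (Real.exp_nonneg _),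
          hindep.lowerE_prod_Icc hX hH hH0 hH1]
    _ ≤ Real.exp (l / 2) * ∏ j ∈ Finset.Icc 1 n, (1 - S.E (fun ω => G j (X 1 ω)) / 4) := by
        refine mul_le_mul_of_nonneg_left (Finset.prod_le_prod (fun j _ => ?_) fun j hj => ?_)
          (Real.exp_nonneg _)
        · exact SubLinExp.lowerE_nonneg (SubLinExp.comp_mem_of_mem (hX j) (hH j))
            fun ω => hH0 j _
        · rw [← hid j (Finset.mem_Icc.1 hj).1 _ (hG j)]
          exact SubLinExp.lowerE_exp_neg_half_le (hX j) (hG j) (hG0 j) (hG1 j)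
    _ ≤ Real.exp (l / 2) *
          Real.exp (-(1 / 4) * ∑ j ∈ Finset.Icc 1 n, S.E fun ω => G j (X 1 ω)) := by
        gcongr
        refine (Finset.prod_one_sub_le_exp_neg_sum _ fun j _ => by linarith [hEG j]).trans_eq ?_
        rw [← Finset.sum_div]
        ring_nf

end Independence

theorem exp_lower_capacity_estimate_general {Ω : Type*} (S : SubLinExp Ω) (X : ℕ → Ω → ℝ)
    (hX : ∀ i, X i ∈ S.H)
    (hind : ∀ A : Set Ω, (A.indicator fun _ => (1 : ℝ)) ∈ S.H)
    (hindep : IndepSeq1 S X) (hid : IdentDist1 S X)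
    (g : ℝ → ℝ) (hg0 : ∀ x, 0 ≤ g x) (hgL : LocLip g)
    (hg : ∀ x : ℝ, (if 1 ≤ x then (1 : ℝ) else 0) ≤ g x ∧
      g x ≤ (if 1 / 2 < x then (1 : ℝ) else 0))
    (M : ℝ) (p : ℝ)
    (n : ℕ) (l : ℝ) :
    -S.E (fun ω => -({ω' | ∑ j ∈ Finset.Icc 1 n,
          g (|X j ω'| / (M * (j : ℝ)) ^ (1 / p)) < l}.indicator (fun _ => (1 : ℝ)) ω))
      ≤ Real.exp (l / 2) * Real.exp (-(1 / 4) *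
          ∑ j ∈ Finset.Icc 1 n, S.E (fun ω => g (|X 1 ω| / (M * (j : ℝ)) ^ (1 / p)))) := by
  have hg1 : ∀ x, g x ≤ 1 := fun x => (hg x).2.trans (by split_ifs <;> norm_num)
  exact hindep.lowerE_sum_lt_le hid hX (G := fun j x => g (|x| / (M * j) ^ (1 / p)))
    (fun j => hgL.comp_lipschitzWith (lipschitzWith_abs_div _) (by simp))
    (fun _ _ => hg0 _) (fun _ _ => hg1 _) n l (hind _)

/-- Exponential lower-capacity estimate: for an IID sequence, a `C_{l,Lip}` function `g`
with `1{x ≥ 1} ≤ g(x) ≤ 1{x > 1/2}`, `M > 0`, `p ≥ 1`, and `v(A) = −Ê(−1_A)`,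
`v(Σ_{j=1}^n g(|X_j|/(Mj)^{1/p}) < l) ≤ e^{l/2} exp(−(1/4) Σ_{j=1}^n Ê[g(|X₁|/(Mj)^{1/p})])`. -/
theorem exp_lower_capacity_estimate {Ω : Type*} (S : SubLinExp Ω) (X : ℕ → Ω → ℝ)
    (hX : ∀ i, X i ∈ S.H)
    (hind : ∀ A : Set Ω, (A.indicator fun _ => (1 : ℝ)) ∈ S.H)
    (hindep : IndepSeq1 S X) (hid : IdentDist1 S X)
    (g : ℝ → ℝ) (hg0 : ∀ x, 0 ≤ g x) (hgL : LocLip g)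
    (hg : ∀ x : ℝ, (if 1 ≤ x then (1 : ℝ) else 0) ≤ g x ∧
      g x ≤ (if 1 / 2 < x then (1 : ℝ) else 0))
    (M : ℝ) (hM : 0 < M) (p : ℝ) (hp : 1 ≤ p)
    (n : ℕ) (hn : 1 ≤ n) (l : ℝ) (hl : 1 ≤ l) :
    -S.E (fun ω => -({ω' | ∑ j ∈ Finset.Icc 1 n,
          g (|X j ω'| / (M * (j : ℝ)) ^ (1 / p)) < l}.indicator (fun _ => (1 : ℝ)) ω))
      ≤ Real.exp (l / 2) * Real.exp (-(1 / 4) *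
          ∑ j ∈ Finset.Icc 1 n, S.E (fun ω => g (|X 1 ω| / (M * (j : ℝ)) ^ (1 / p)))) :=
  exp_lower_capacity_estimate_general S X hX hind hindep hid g hg0 hgL hg M p n l
end
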